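/- arXiv:1807.03742 — 6 statements merged into one kernel-verified Lean document; each statement's English description precedes it below -/
import Mathlib

section
/- Let n ≥ 1, let a, b ∈ ℤ, and let I = (i_1,…,i_r) be a partition of n into positive parts. Then A(a,I) = A(b,I); that is, the integer coeff_{x·y^{n−1}}(∏_{q=1}^r c_{i_q}(a)) + a·coeff_{y^n}(∏_{q=1}^r c_{i_q}(a)) does not depend on a. (This is the Chern-number form of the paper's main Theorem 1: the complex manifolds P^n(a), the projectivisations ℙ(η₁^a ⊕ ℂ^{n−1}) over ℂP¹, corresponding to different a ∈ ℤ are complex bordant to each other, since by the Milnor–Novikov theorem stably complex manifolds with equal Chern numbers are bordant.) -/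
open MvPolynomial Finset

/-- `x = X 0` in `ℤ[x,y]`. -/
noncomputable def xv : MvPolynomial (Fin 2) ℤ := MvPolynomial.X 0

/-- `y = X 1` in `ℤ[x,y]`. -/
noncomputable def yv : MvPolynomial (Fin 2) ℤ := MvPolynomial.X 1

/-- The `i`-th Chern class `c_i(a)` of the tangent bundle of `P^n(a)`:
`C(n,i)·y^i + (2·C(n,i−1) − a·C(n−1,i−1))·x·y^{i−1}`. -/
noncomputable def chern (n : ℕ) (a : ℤ) (i : ℕ) : MvPolynomial (Fin 2) ℤ :=
  MvPolynomial.C (n.choose i : ℤ) * yv ^ i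
    + MvPolynomial.C (2 * (n.choose (i - 1) : ℤ) - a * ((n - 1).choose (i - 1) : ℤ))
      * xv * yv ^ (i - 1)

/-- Coefficient of the monomial `x·y^{n-1}`. -/
noncomputable def coeffXY (n : ℕ) (f : MvPolynomial (Fin 2) ℤ) : ℤ :=
  f.coeff (Finsupp.single (0 : Fin 2) 1 + Finsupp.single (1 : Fin 2) (n - 1))

/-- Coefficient of the monomial `y^n`. -/
noncomputable def coeffY (n : ℕ) (f : MvPolynomial (Fin 2) ℤ) : ℤ :=
  f.coeff (Finsupp.single (1 : Fin 2) n)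

/-- The Chern number `A(a,I) = coeff_{x·y^{n−1}}(∏ c_{i_q}(a)) + a·coeff_{y^n}(∏ c_{i_q}(a))`. -/
noncomputable def chernNum (n : ℕ) (a : ℤ) {r : ℕ} (i : Fin r → ℕ) : ℤ :=
  coeffXY n (∏ q, chern n a (i q)) + a * coeffY n (∏ q, chern n a (i q))

/-!
Evaluate `x ↦ ε`, `y ↦ 1` in the dual numbers `ℤ[ε]`. On a homogeneous polynomial of degree `n`
this reads off the coefficient of `y^n` as the real part and that of `x·y^{n-1}` as the `ε`-part,
so `A(a,I)` is the `ε`-part plus `a` times the real part of `∏_q (C(n,i_q) + ε·d_q(a))`, where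
`d_q(a) = 2·C(n,i_q-1) - a·C(n-1,i_q-1)`. The terms in `a` add up to
`a·(∏_q C(n,i_q) - ∑_q C(n-1,i_q-1)·∏_{p≠q} C(n,i_p))`, which vanishes because
`n·C(n-1,i-1) = i·C(n,i)` and `∑_q i_q = n`.
-/

open TrivSqZeroExt

namespace DualNumber

variable {R ι : Type*} [CommSemiring R]

theorem fst_prod (s : Finset ι) (z : ι → R[ε]) : (∏ q ∈ s, z q).fst = ∏ q ∈ s, (z q).fst :=
  map_prod (fstHom R R R) z s

theorem snd_prod [DecidableEq ι] (s : Finset ι) (z : ι → R[ε]) :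
    (∏ q ∈ s, z q).snd = ∑ q ∈ s, (z q).snd * ∏ p ∈ s.erase q, (z p).fst := by
  induction s using Finset.induction_on with
  | empty => simp
  | insert a s ha ih =>
    have herase : ∀ q ∈ s, ∏ p ∈ (insert a s).erase q, (z p).fst
        = (z a).fst * ∏ p ∈ s.erase q, (z p).fst := fun q hq => by
      rw [erase_insert_of_ne (by rintro rfl; exact ha hq),
        prod_insert fun h => ha (mem_of_mem_erase h)]
    rw [sum_insert ha, erase_insert ha, sum_congr rfl fun q hq => by rw [herase q hq],
      prod_insert ha, snd_mul, ih, fst_prod, mul_sum, add_comm]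
    congr 1
    exact sum_congr rfl fun q _ => mul_left_comm _ _ _

theorem snd_eps_pow (k : ℕ) : (ε ^ k : R[ε]).snd = if k = 1 then 1 else 0 := by
  rcases k with _ | _ | k <;> simp [snd_pow]

end DualNumber

theorem mul_choose_sub_one_sub_one (n : ℕ) {k : ℕ} (hk : 1 ≤ k) :
    n * (n - 1).choose (k - 1) = k * n.choose k := by
  obtain ⟨k, rfl⟩ := Nat.exists_eq_add_of_le' hk
  cases n with
  | zero => simp
  | succ n => simpa [mul_comm] using Nat.add_one_mul_choose_eq n k

theorem sum_choose_sub_one_mul_prod_erase {ι : Type*} [Fintype ι] [DecidableEq ι] {n : ℕ}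
    (hn : 1 ≤ n) (i : ι → ℕ) (hi : ∀ q, 1 ≤ i q) (hsum : ∑ q, i q = n) :
    ∑ q, (n - 1).choose (i q - 1) * ∏ p ∈ univ.erase q, n.choose (i p)
      = ∏ q, n.choose (i q) := by
  refine Nat.eq_of_mul_eq_mul_left hn ?_
  calc n * ∑ q, (n - 1).choose (i q - 1) * ∏ p ∈ univ.erase q, n.choose (i p)
      = ∑ q, i q * (n.choose (i q) * ∏ p ∈ univ.erase q, n.choose (i p)) := by
        rw [mul_sum]
        refine sum_congr rfl fun q _ => ?_
        rw [← mul_assoc, mul_choose_sub_one_sub_one n (hi q), mul_assoc]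
    _ = n * ∏ q, n.choose (i q) := by
        simp only [mul_prod_erase univ (fun p => n.choose (i p)) (mem_univ _), ← sum_mul, hsum]

noncomputable def dualEval : MvPolynomial (Fin 2) ℤ →ₐ[ℤ] DualNumber ℤ :=
  aeval ![DualNumber.eps, 1]

theorem dualEval_monomial (d : Fin 2 →₀ ℕ) (c : ℤ) :
    dualEval (monomial d c) = inl c * DualNumber.eps ^ d 0 := by
  simp [dualEval, aeval_monomial, Finsupp.prod_fintype, ← inl_intCast]

theorem MvPolynomial.IsHomogeneous.eq_single_add_single_of_mem_support {f : MvPolynomial (Fin 2) ℤ} {n : ℕ}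
    (hf : f.IsHomogeneous n) {d : Fin 2 →₀ ℕ} (hd : d ∈ f.support) :
    d = Finsupp.single 0 (d 0) + Finsupp.single 1 (n - d 0) := by
  have hdeg : d 0 + d 1 = n := by
    simpa [Finsupp.weight_apply, Finsupp.sum_fintype] using hf (mem_support_iff.mp hd)
  ext j
  fin_cases j <;> simp; omega

theorem fst_dualEval_of_isHomogeneous {f : MvPolynomial (Fin 2) ℤ} {n : ℕ}
    (hf : f.IsHomogeneous n) : (dualEval f).fst = coeffY n f := by
  conv_lhs => rw [f.as_sum]
  rw [map_sum, fst_sum, coeffY, sum_eq_single (Finsupp.single 1 n)]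
  · simp [dualEval_monomial]
  · intro d hd hne
    have h0 : d 0 ≠ 0 := fun h0 => hne (by rw [hf.eq_single_add_single_of_mem_support hd, h0]; simp)
    simp [dualEval_monomial, h0]
  · intro h
    rw [notMem_support_iff.mp h, monomial_zero, map_zero, fst_zero]

theorem snd_dualEval_of_isHomogeneous {f : MvPolynomial (Fin 2) ℤ} {n : ℕ}
    (hf : f.IsHomogeneous n) : (dualEval f).snd = coeffXY n f := by
  conv_lhs => rw [f.as_sum]
  rw [map_sum, snd_sum, coeffXY,
    sum_eq_single (Finsupp.single 0 1 + Finsupp.single 1 (n - 1))]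
  · simp [dualEval_monomial]
  · intro d hd hne
    have h1 : d 0 ≠ 1 := fun h1 => hne (by rw [hf.eq_single_add_single_of_mem_support hd, h1])
    rw [dualEval_monomial, snd_mul, DualNumber.snd_eps_pow, if_neg h1]
    simp
  · intro h
    rw [notMem_support_iff.mp h, monomial_zero, map_zero, snd_zero]

theorem isHomogeneous_chern (n : ℕ) (a : ℤ) {i : ℕ} (hi : 1 ≤ i) :
    (chern n a i).IsHomogeneous i := by
  have hxy : (xv * yv ^ (i - 1)).IsHomogeneous (1 + (i - 1)) :=
    (isHomogeneous_X ℤ 0).mul (isHomogeneous_X_pow 1 (i - 1))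
  rw [Nat.add_sub_cancel' hi] at hxy
  rw [chern, mul_assoc]
  exact (isHomogeneous_C_mul_X_pow _ _ _).add (hxy.C_mul _)

theorem dualEval_chern (n : ℕ) (a : ℤ) (i : ℕ) :
    dualEval (chern n a i) = inl (n.choose i : ℤ)
      + inr (2 * (n.choose (i - 1) : ℤ) - a * ((n - 1).choose (i - 1) : ℤ)) := by
  simp [chern, dualEval, xv, yv, DualNumber.inr_eq_smul_eps]

theorem chernNum_eq_sum {n r : ℕ} (hn : 1 ≤ n) {i : Fin r → ℕ} (hi : ∀ q, 1 ≤ i q)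
    (hsum : ∑ q, i q = n) (a : ℤ) :
    chernNum n a i
      = ∑ q, 2 * (n.choose (i q - 1) : ℤ) * ∏ p ∈ univ.erase q, (n.choose (i p) : ℤ) := by
  have hom : (∏ q, chern n a (i q)).IsHomogeneous n := by
    simpa only [hsum] using IsHomogeneous.prod univ (fun q => chern n a (i q)) i fun q _ =>
      isHomogeneous_chern n a (hi q)
  have key : ∑ q, ((n - 1).choose (i q - 1) : ℤ) * ∏ p ∈ univ.erase q, (n.choose (i p) : ℤ)
      = ∏ q, (n.choose (i q) : ℤ) := by
    exact_mod_cast sum_choose_sub_one_mul_prod_erase hn i hi hsum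
  rw [chernNum, ← fst_dualEval_of_isHomogeneous hom, ← snd_dualEval_of_isHomogeneous hom,
    map_prod, DualNumber.fst_prod, DualNumber.snd_prod]
  simp only [dualEval_chern, fst_add, snd_add, fst_inl, fst_inr, snd_inl, snd_inr, add_zero,
    zero_add]
  rw [← key, mul_sum, ← sum_add_distrib]
  exact sum_congr rfl fun q _ => by ring

theorem chernNum_independent_of_a_general (n r : ℕ) (hn : 1 ≤ n)
    (i : Fin r → ℕ) (hi : ∀ q, 1 ≤ i q) (hsum : ∑ q, i q = n) (a b : ℤ) :
    chernNum n a i = chernNum n b i := by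
  rw [chernNum_eq_sum hn hi hsum, chernNum_eq_sum hn hi hsum]

/-- For `n ≥ 1`, any partition `I` of `n` into positive parts and any
`a, b ∈ ℤ`, one has `A(a,I) = A(b,I)`; i.e. the Chern numbers of `P^n(a)` do not depend
on `a`, so the manifolds `P^n(a)` for different `a` are complex bordant to each other. -/
theorem chernNum_independent_of_a (n r : ℕ) (hn : 1 ≤ n) (hr : 1 ≤ r)
    (i : Fin r → ℕ) (hi : ∀ q, 1 ≤ i q) (hsum : ∑ q, i q = n) (a b : ℤ) :
    chernNum n a i = chernNum n b i :=
  chernNum_independent_of_a_general n r hn i hi hsum a b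
end

section
/- Let n ≥ 1 and let I = (i_1,…,i_r) be a partition of n into positive parts. Then A(1,I) = A(0,I); that is, every Chern number of the Milnor hypersurface H_{1,n} = P^n(1) equals the corresponding Chern number of ℂP¹ × ℂP^{n−1} = P^n(0). (This is the Chern-number form of the paper's Corollary: H_{1,n} is complex bordant to ℂP^{n−1} × ℂP¹.) -/
open MvPolynomial Finset

/-!
Substituting `x ↦ ε·y`, `y ↦ y` with `ε² = 0` sends `c·y^i + d·x·y^{i-1}` to the monomial
`(c + d·ε)·y^i`, and for `N ≥ 1` the coefficients of `y^N` and `x·y^{N-1}` become the two components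
of the coefficient of `y^N`. So the product `∏_q c_{i_q}(a)` becomes `(∏_q (C(n,i_q) + d_q(a)·ε))·y^n`, and
`A(a,I) = ∑_p d_p(a) ∏_{q≠p} C(n,i_q) + a·∏_q C(n,i_q)` with `d_p(a) = 2·C(n,i_p−1) − a·C(n−1,i_p−1)`.
This is affine in `a` with slope `∏_q C(n,i_q) − ∑_p C(n−1,i_p−1) ∏_{q≠p} C(n,i_q)`, which vanishes
because `n·C(n−1,i−1) = i·C(n,i)` and `∑_p i_p = n`.
-/

namespace TrivSqZeroExt

variable {ι R M : Type*} [CommSemiring R] [AddCommMonoid M] [Module R M] [Module Rᵐᵒᵖ M]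
  [IsCentralScalar R M]

theorem fst_prod (s : Finset ι) (x : ι → TrivSqZeroExt R M) :
    (∏ q ∈ s, x q).fst = ∏ q ∈ s, (x q).fst :=
  map_prod (fstHom R R M) x s

theorem snd_prod [DecidableEq ι] (s : Finset ι) (x : ι → TrivSqZeroExt R M) :
    (∏ q ∈ s, x q).snd = ∑ p ∈ s, (∏ q ∈ s.erase p, (x q).fst) • (x p).snd := by
  induction s using Finset.induction_on with
  | empty => simp
  | insert p s hp ih =>
    rw [prod_insert hp, snd_mul, ih, fst_prod, sum_insert hp, erase_insert hp, smul_sum,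
      op_smul_eq_smul, add_comm]
    refine congrArg₂ _ rfl (sum_congr rfl fun q hq => ?_)
    rw [erase_insert_of_ne (ne_of_mem_of_not_mem hq hp).symm,
      prod_insert (fun h => hp (mem_of_mem_erase h)), mul_smul]

end TrivSqZeroExt

theorem Finsupp.single_zero_add_single_one_inj {a b a' b' : ℕ} :
    Finsupp.single (0 : Fin 2) a + Finsupp.single 1 b
      = Finsupp.single 0 a' + Finsupp.single 1 b' ↔ a = a' ∧ b = b' := by
  refine ⟨fun h => ⟨?_, ?_⟩, fun ⟨ha, hb⟩ => ha ▸ hb ▸ rfl⟩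
  · simpa using DFunLike.congr_fun h 0
  · simpa using DFunLike.congr_fun h 1

noncomputable def dualSubst (R : Type*) [CommSemiring R] :
    MvPolynomial (Fin 2) R →ₐ[R] Polynomial (DualNumber R) :=
  aeval ![Polynomial.C (DualNumber.eps : DualNumber R) * Polynomial.X, Polynomial.X]

section DualSubst

open TrivSqZeroExt

variable {R : Type*} [CommSemiring R]

theorem coeff_dualSubst (f : MvPolynomial (Fin 2) R) {N : ℕ} (hN : 0 < N) :
    (dualSubst R f).coeff N = inl (f.coeff (Finsupp.single 1 N))
      + inr (f.coeff (Finsupp.single 0 1 + Finsupp.single 1 (N - 1))) := by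
  induction f using MvPolynomial.induction_on' with
  | add f g hf hg =>
    simp only [map_add, Polynomial.coeff_add, hf, hg, coeff_add, inl_add, inr_add]
    abel
  | monomial s c =>
    obtain ⟨a, b, rfl⟩ : ∃ a b, s = Finsupp.single 0 a + Finsupp.single 1 b :=
      ⟨s 0, s 1, by ext j; fin_cases j <;> simp⟩
    have hsubst : dualSubst R (monomial (Finsupp.single 0 a + Finsupp.single 1 b) c)
        = Polynomial.C (inl c * DualNumber.eps ^ a) * Polynomial.X ^ (a + b) := by
      simp only [monomial_single_add, ← C_mul_X_pow_eq_monomial, dualSubst, map_mul, map_pow,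
        aeval_X, aeval_C, Matrix.cons_val_zero, Matrix.cons_val_one, Polynomial.algebraMap_apply,
        algebraMap_eq_inl]
      ring
    rw [hsubst, Polynomial.coeff_C_mul_X_pow, coeff_monomial, coeff_monomial,
      ← zero_add (Finsupp.single 1 N), ← Finsupp.single_zero 0]
    simp only [Finsupp.single_zero_add_single_one_inj]
    rcases a with _ | _ | a
    · simp [eq_comm, apply_ite inl]
    · have hb : N = 1 + b ↔ b = N - 1 := by omega
      simp [hb, inl_mul_eq_smul, DualNumber.inr_eq_smul_eps]
    · simp [pow_succ, mul_assoc, DualNumber.eps_mul_eps]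

theorem dualSubst_binomial (c d : R) {i : ℕ} (hi : 0 < i) :
    dualSubst R (C c * X 1 ^ i + C d * X 0 * X 1 ^ (i - 1))
      = Polynomial.C (inl c + inr d) * Polynomial.X ^ i := by
  obtain ⟨j, rfl⟩ := Nat.exists_eq_add_one.mpr hi
  simp only [dualSubst, map_add, map_mul, aeval_C, aeval_X, map_pow, Nat.add_sub_cancel,
    Polynomial.algebraMap_apply, algebraMap_eq_inl, DualNumber.inr_eq_smul_eps,
    ← inl_mul_eq_smul, Matrix.cons_val_zero, Matrix.cons_val_one]
  ring

end DualSubst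

theorem Nat.sum_prod_erase_choose_mul_choose_pred {ι : Type*} [DecidableEq ι] (s : Finset ι)
    (k : ι → ℕ) {n : ℕ} (hn : 0 < n) (hk : ∀ p ∈ s, 0 < k p) (hsum : ∑ p ∈ s, k p = n) :
    ∑ p ∈ s, (∏ q ∈ s.erase p, n.choose (k q)) * (n - 1).choose (k p - 1)
      = ∏ q ∈ s, n.choose (k q) := by
  refine Nat.eq_of_mul_eq_mul_left hn ?_
  have hterm : ∀ p ∈ s, n * ((∏ q ∈ s.erase p, n.choose (k q)) * (n - 1).choose (k p - 1))
      = k p * ∏ q ∈ s, n.choose (k q) := fun p hp => by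
    obtain ⟨m, rfl⟩ := Nat.exists_eq_add_one.mpr hn
    obtain ⟨j, hj⟩ := Nat.exists_eq_add_one.mpr (hk p hp)
    rw [← mul_prod_erase s _ hp, hj, Nat.add_sub_cancel, Nat.add_sub_cancel, mul_left_comm,
      Nat.add_one_mul_choose_eq]
    ring
  rw [mul_sum, sum_congr rfl hterm, ← sum_mul, hsum]

open TrivSqZeroExt in
theorem chernNum_eq (n : ℕ) (a : ℤ) {r : ℕ} (i : Fin r → ℕ) (hn : 0 < n) (hi : ∀ q, 0 < i q)
    (hsum : ∑ q, i q = n) :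
    chernNum n a i = ∑ p, (∏ q ∈ univ.erase p, (n.choose (i q) : ℤ))
        * (2 * n.choose (i p - 1) - a * (n - 1).choose (i p - 1))
      + a * ∏ q, (n.choose (i q) : ℤ) := by
  have hsubst : dualSubst ℤ (∏ q, chern n a (i q)) = Polynomial.C (∏ q, (inl (n.choose (i q) : ℤ)
      + inr (2 * n.choose (i q - 1) - a * (n - 1).choose (i q - 1)))) * Polynomial.X ^ n := by
    rw [map_prod, ← hsum, ← prod_pow_eq_pow_sum, map_prod, ← prod_mul_distrib]
    exact prod_congr rfl fun q _ => dualSubst_binomial _ _ (hi q)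
  have hcoeff := coeff_dualSubst (∏ q, chern n a (i q)) hn
  rw [hsubst, Polynomial.coeff_C_mul_X_pow, if_pos rfl] at hcoeff
  have hY := congrArg fst hcoeff
  have hXY := congrArg snd hcoeff
  simp only [fst_prod, snd_prod, fst_add, snd_add, fst_inl, fst_inr, snd_inl, snd_inr, add_zero,
    zero_add, smul_eq_mul] at hY hXY
  rw [chernNum, coeffXY, coeffY, ← hY, ← hXY]

theorem chernNum_milnor_eq_product_general (n r : ℕ) (hn : 1 ≤ n)
    (i : Fin r → ℕ) (hi : ∀ q, 1 ≤ i q) (hsum : ∑ q, i q = n) :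
    chernNum n 1 i = chernNum n 0 i := by
  have hslope : ∑ p, (∏ q ∈ univ.erase p, (n.choose (i q) : ℤ)) * (n - 1).choose (i p - 1)
      = ∏ q, (n.choose (i q) : ℤ) := by
    exact_mod_cast Nat.sum_prod_erase_choose_mul_choose_pred univ i hn (fun q _ => hi q) hsum
  rw [chernNum_eq n 1 i hn hi hsum, chernNum_eq n 0 i hn hi hsum]
  simp only [one_mul, zero_mul, sub_zero, mul_sub, sum_sub_distrib, hslope]
  ring

/-- For `n ≥ 1` and any partition `I` of `n` into positive parts,
`A(1,I) = A(0,I)`: every Chern number of the Milnor hypersurface `H_{1,n} = P^n(1)`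
equals the corresponding Chern number of `ℂP¹ × ℂP^{n−1} = P^n(0)`. -/
theorem chernNum_milnor_eq_product (n r : ℕ) (hn : 1 ≤ n) (hr : 1 ≤ r)
    (i : Fin r → ℕ) (hi : ∀ q, 1 ≤ i q) (hsum : ∑ q, i q = n) :
    chernNum n 1 i = chernNum n 0 i :=
  chernNum_milnor_eq_product_general n r hn i hi hsum
end

section
/- Let n ≥ 1, a ∈ ℤ, and let I = (i_1,…,i_r) be a partition of n into positive parts. Then A(a,I) = 2·∑_{q=1}^r C(n, i_q − 1)·∏_{s ≠ q} C(n, i_s). In particular the right-hand side, and hence the Chern number c_I(P^n(a)), does not depend on a. (Integer form of Proposition 2.7(i).) -/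
open MvPolynomial Finset

section Aux

open TrivSqZeroExt DualNumber

/-- Product of elements `inl c + inr d` in the dual numbers. -/
lemma prod_inl_add_inr {R : Type*} [CommRing R] {ι : Type*} [DecidableEq ι]
    (c d : ι → R) (S : Finset ι) :
    (∏ q ∈ S, (inl (c q) + inr (d q) : DualNumber R))
      = inl (∏ q ∈ S, c q) + inr (∑ q ∈ S, d q * ∏ s ∈ S.erase q, c s) := by
  induction S using Finset.induction_on with
  | empty => simp
  | @insert q S hq ih =>
    rw [Finset.prod_insert hq, ih]
    apply TrivSqZeroExt.ext
    · simp [Finset.prod_insert hq]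
    · simp only [DualNumber.snd_mul, fst_add, fst_inl, fst_inr, snd_add, snd_inl, snd_inr,
        add_zero, zero_add, Finset.sum_insert hq, Finset.prod_insert hq,
        Finset.erase_insert hq]
      rw [Finset.mul_sum]
      have : ∀ p ∈ S, (c q) * (d p * ∏ s ∈ S.erase p, c s)
          = d p * ∏ s ∈ (insert q S).erase p, c s := by
        intro p hp
        rw [Finset.erase_insert_of_ne (by rintro rfl; exact hq hp),
          Finset.prod_insert (fun h => hq (Finset.mem_of_mem_erase h))]
        ring
      rw [Finset.sum_congr rfl this]
      ring

/-- The evaluation point `x := ε`, `y := 1` in the dual numbers over `ℤ`. -/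
noncomputable def vmap : Fin 2 → DualNumber ℤ := ![DualNumber.eps, 1]

lemma deg2 (d : Fin 2 →₀ ℕ) : d.degree = d 0 + d 1 := by
  rw [Finsupp.degree, ← Fin.sum_univ_two (fun j => d j)]
  exact Finset.sum_subset (Finset.subset_univ _)
    (fun x _ hx => Finsupp.notMem_support_iff.mp hx)

lemma intCast_eq_inl (c : ℤ) : ((c : ℤ) : DualNumber ℤ) = TrivSqZeroExt.inl c := by
  apply TrivSqZeroExt.ext <;> simp [TrivSqZeroExt.fst_intCast, TrivSqZeroExt.snd_intCast]

lemma aeval_vmap_monomial (d : Fin 2 →₀ ℕ) (c : ℤ) :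
    aeval vmap (monomial d c) = inl c * (ε : DualNumber ℤ) ^ (d 0) := by
  rw [aeval_monomial, Finsupp.prod_fintype _ _ (fun i => pow_zero _), Fin.prod_univ_two]
  simp [vmap, intCast_eq_inl]

/-- Evaluation of a homogeneous polynomial of degree `n ≥ 1` at `(ε, 1)` recovers the
coefficients of `y^n` and `x·y^{n-1}`. -/
lemma aeval_vmap_eq (n : ℕ) (hn : 1 ≤ n) (f : MvPolynomial (Fin 2) ℤ)
    (hf : f.IsHomogeneous n) :
    aeval vmap f = inl (coeffY n f) + inr (coeffXY n f) := by
  classical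
  set A : Fin 2 →₀ ℕ := Finsupp.single (1 : Fin 2) n with hA
  set B : Fin 2 →₀ ℕ := Finsupp.single (0 : Fin 2) 1 + Finsupp.single (1 : Fin 2) (n - 1) with hB
  have hA0 : A 0 = 0 := by simp [hA]
  have hA1 : A 1 = n := by simp [hA]
  have hB0 : B 0 = 1 := by simp [hB]
  have hB1 : B 1 = n - 1 := by simp [hB]
  have hAB : A ≠ B := fun h => by rw [h] at hA0; omega
  have key : ∀ d ∈ f.support,
      aeval vmap (monomial d (coeff d f))
        = (if d = A then inl (coeff d f) else 0)
          + (if d = B then inr (coeff d f) else 0) := by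
    intro d hd
    have hdeg : d 0 + d 1 = n := by
      rw [← deg2]
      by_contra h
      exact (MvPolynomial.mem_support_iff.mp hd) (hf.coeff_eq_zero h)
    rw [aeval_vmap_monomial]
    rcases Nat.lt_or_ge (d 0) 2 with h2 | h2
    · interval_cases h : d 0
      · have hdA : d = A := by
          have hd1 : d 1 = n := by omega
          ext j
          fin_cases j
          · show d 0 = A 0; rw [h, hA0]
          · show d 1 = A 1; rw [hd1, hA1]
        rw [if_pos hdA, if_neg (by rw [hdA]; exact hAB), pow_zero, mul_one, add_zero]
      · have hdB : d = B := by
          have hd1 : d 1 = n - 1 := by omega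
          ext j
          fin_cases j
          · show d 0 = B 0; rw [h, hB0]
          · show d 1 = B 1; rw [hd1, hB1]
        rw [if_pos hdB, if_neg (by rw [hdB]; exact fun hh => hAB hh.symm), pow_one]
        simp [intCast_eq_inl]
    · have hdA : d ≠ A := fun h => by rw [h] at h2; omega
      have hdB : d ≠ B := fun h => by rw [h, hB0] at h2; omega
      rw [if_neg hdA, if_neg hdB, add_zero]
      obtain ⟨m, hm⟩ : ∃ m, d 0 = m + 2 := ⟨d 0 - 2, by omega⟩
      rw [hm]
      have h : (ε : DualNumber ℤ) ^ (m+2) = ε ^ m * (ε * ε) := by ring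
      rw [h, eps_mul_eps, mul_zero, mul_zero]
  conv_lhs => rw [f.as_sum]
  rw [map_sum, Finset.sum_congr rfl key, Finset.sum_add_distrib,
    Finset.sum_ite_eq' f.support A (fun d => inl (coeff d f)),
    Finset.sum_ite_eq' f.support B (fun d => inr (coeff d f))]
  have cA : coeffY n f = coeff A f := rfl
  have cB : coeffXY n f = coeff B f := rfl
  rw [cA, cB]
  split_ifs with h1 h2 h3 <;>
    simp_all [MvPolynomial.notMem_support_iff]

lemma aeval_vmap_chern (n : ℕ) (a : ℤ) (k : ℕ) :
    aeval vmap (chern n a k)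
      = inl ((n.choose k : ℤ))
        + inr (2 * (n.choose (k-1) : ℤ) - a * ((n-1).choose (k-1) : ℤ)) := by
  simp [chern, xv, yv, vmap, TrivSqZeroExt.algebraMap_eq_inl, intCast_eq_inl]

lemma chern_hom (n : ℕ) (a : ℤ) (k : ℕ) (hk : 1 ≤ k) : (chern n a k).IsHomogeneous k := by
  unfold chern xv yv
  apply MvPolynomial.IsHomogeneous.add
  · have h := (isHomogeneous_C (Fin 2) ((n.choose k : ℤ))).mul
      ((isHomogeneous_X ℤ (1 : Fin 2)).pow k)
    simpa using h
  · have h := ((isHomogeneous_C (Fin 2)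
        (2 * (n.choose (k - 1) : ℤ) - a * ((n - 1).choose (k - 1) : ℤ))).mul
      (isHomogeneous_X ℤ (0 : Fin 2))).mul ((isHomogeneous_X ℤ (1 : Fin 2)).pow (k-1))
    have e : 0 + 1 + 1 * (k - 1) = k := by omega
    rwa [e] at h

lemma key_identity (n r : ℕ) (hn : 1 ≤ n) (i : Fin r → ℕ) (hi : ∀ q, 1 ≤ i q)
    (hsum : ∑ q, i q = n) :
    ∑ q, ((n-1).choose (i q - 1) : ℤ) * ∏ s ∈ Finset.univ.erase q, (n.choose (i s) : ℤ)
      = ∏ q, (n.choose (i q) : ℤ) := by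
  have hn0 : (n:ℤ) ≠ 0 := Int.natCast_ne_zero.mpr (by omega)
  apply mul_left_cancel₀ hn0
  rw [Finset.mul_sum]
  have step : ∀ q ∈ (Finset.univ : Finset (Fin r)),
      (n:ℤ) * (((n-1).choose (i q - 1):ℤ) * ∏ s ∈ Finset.univ.erase q, (n.choose (i s):ℤ))
        = (i q : ℤ) * ∏ s, (n.choose (i s):ℤ) := by
    intro q _
    have h1 : n * (n-1).choose (i q - 1) = i q * n.choose (i q) := by
      have h := Nat.add_one_mul_choose_eq (n-1) (i q - 1)
      have e1 : n - 1 + 1 = n := by omega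
      have e2 : i q - 1 + 1 = i q := by have := hi q; omega
      simp only [Nat.succ_eq_add_one, e1, e2] at h
      rw [h]; ring
    calc (n:ℤ) * (((n-1).choose (i q - 1):ℤ) * ∏ s ∈ Finset.univ.erase q, (n.choose (i s):ℤ))
        = ((n * (n-1).choose (i q - 1) : ℕ) : ℤ)
            * ∏ s ∈ Finset.univ.erase q, (n.choose (i s):ℤ) := by push_cast; ring
      _ = ((i q * n.choose (i q) : ℕ):ℤ) * ∏ s ∈ Finset.univ.erase q, (n.choose (i s):ℤ) := by
            rw [h1]
      _ = (i q:ℤ) * ((n.choose (i q):ℤ) * ∏ s ∈ Finset.univ.erase q, (n.choose (i s):ℤ)) := by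
            push_cast; ring
      _ = (i q:ℤ) * ∏ s, (n.choose (i s):ℤ) := by
            rw [Finset.mul_prod_erase Finset.univ (fun s => ((n.choose (i s)):ℤ))
              (Finset.mem_univ q)]
  rw [Finset.sum_congr rfl step, ← Finset.sum_mul]
  have : (∑ q, (i q : ℤ)) = (n : ℤ) := by exact_mod_cast congrArg (Nat.cast : ℕ → ℤ) hsum
  rw [this]

end Aux

open TrivSqZeroExt DualNumber in
/-- `A(a,I) = 2·∑_q C(n, i_q − 1)·∏_{s ≠ q} C(n, i_s)`
(integer form of Proposition 2.7(i)). -/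
theorem chernNum_formula_int (n r : ℕ) (hn : 1 ≤ n) (hr : 1 ≤ r)
    (i : Fin r → ℕ) (hi : ∀ q, 1 ≤ i q) (hsum : ∑ q, i q = n) (a : ℤ) :
    chernNum n a i
      = 2 * ∑ q, (n.choose (i q - 1) : ℤ) * ∏ s ∈ Finset.univ.erase q, (n.choose (i s) : ℤ) := by
  classical
  have hprodhom : (∏ q, chern n a (i q)).IsHomogeneous n := by
    have h := MvPolynomial.IsHomogeneous.prod Finset.univ (fun q => chern n a (i q))
      (fun q => i q) (fun q _ => chern_hom n a (i q) (hi q))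
    rwa [hsum] at h
  have heval : aeval vmap (∏ q, chern n a (i q))
      = inl (∏ q, (n.choose (i q):ℤ))
        + inr (∑ q, (2 * (n.choose (i q - 1) : ℤ) - a * ((n-1).choose (i q - 1) : ℤ))
            * ∏ s ∈ Finset.univ.erase q, (n.choose (i s):ℤ)) := by
    rw [map_prod]
    simp_rw [aeval_vmap_chern]
    exact prod_inl_add_inr _ _ _
  have h2 := aeval_vmap_eq n hn _ hprodhom
  rw [heval] at h2
  have hY : coeffY n (∏ q, chern n a (i q)) = ∏ q, (n.choose (i q):ℤ) := by
    have h := congrArg TrivSqZeroExt.fst h2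
    simp only [fst_add, fst_inl, fst_inr, add_zero] at h
    exact h.symm
  have hXY : coeffXY n (∏ q, chern n a (i q))
      = ∑ q, (2 * (n.choose (i q - 1) : ℤ) - a * ((n-1).choose (i q - 1) : ℤ))
          * ∏ s ∈ Finset.univ.erase q, (n.choose (i s):ℤ) := by
    have h := congrArg TrivSqZeroExt.snd h2
    simp only [snd_add, snd_inl, snd_inr, zero_add] at h
    exact h.symm
  unfold chernNum
  rw [hXY, hY, ← key_identity n r hn i hi hsum, Finset.mul_sum, Finset.mul_sum,
    ← Finset.sum_add_distrib]
  exact Finset.sum_congr rfl (fun q _ => by ring)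
end

section
/- Let n ≥ 1, a ∈ ℤ, and let I = (i_1,…,i_r) be a partition of n into positive parts. Then, as an identity in ℚ, A(a,I) = 2·(∏_{s=1}^r C(n, i_s))·∑_{q=1}^r i_q/(n + 1 − i_q). (Note that 1 ≤ i_q ≤ n for every q, so all denominators n + 1 − i_q are positive.) This is the Chern number formula of Proposition 2.7(i): c_I(P^n(a)) = 2·∏_{s=1}^r C(n,i_s)·∑_{q=1}^r i_q/(n+1−i_q). -/
open MvPolynomial Finset

/-- The coefficient of `x·y^{i-1}` in `chern n a i`. -/
noncomputable def dcoef (n : ℕ) (a : ℤ) (i : ℕ) : ℤ :=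
  2 * (n.choose (i - 1) : ℤ) - a * ((n - 1).choose (i - 1) : ℤ)

lemma prod_chern_form (n : ℕ) (a : ℤ) {r : ℕ} (i : Fin r → ℕ) (s : Finset (Fin r))
    (hs : s.Nonempty) (hi : ∀ q ∈ s, 1 ≤ i q) :
    ∃ g, ∏ q ∈ s, chern n a (i q)
      = MvPolynomial.C (∏ q ∈ s, (n.choose (i q) : ℤ)) * yv ^ (∑ q ∈ s, i q)
        + MvPolynomial.C (∑ q ∈ s, dcoef n a (i q) * ∏ p ∈ s.erase q, (n.choose (i p) : ℤ))
            * xv * yv ^ (∑ q ∈ s, i q - 1)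
        + g * xv * xv := by
  induction hs using Finset.Nonempty.cons_induction with
  | singleton q =>
    refine ⟨0, ?_⟩
    simp [chern, dcoef]
  | cons q t hq ht IH =>
    have hit : ∀ p ∈ t, 1 ≤ i p := fun p hp => hi p (by simp [hp])
    obtain ⟨g, hg⟩ := IH hit
    have hm : 1 ≤ ∑ p ∈ t, i p := le_trans (hi ht.choose (by simp [ht.choose_spec]))
      (Finset.single_le_sum (fun p _ => Nat.zero_le _) ht.choose_spec)
    have hiq : 1 ≤ i q := hi q (by simp)
    set m := ∑ p ∈ t, i p with hmdef
    obtain ⟨u, hu⟩ : ∃ u, i q = u + 1 := ⟨i q - 1, by omega⟩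
    obtain ⟨v, hv⟩ : ∃ v, m = v + 1 := ⟨m - 1, by omega⟩
    set B := ∏ p ∈ t, (n.choose (i p) : ℤ) with hB
    set D := ∑ p ∈ t, dcoef n a (i p) * ∏ p' ∈ t.erase p, (n.choose (i p') : ℤ) with hD
    refine ⟨MvPolynomial.C (dcoef n a (i q) * D) * yv ^ (u + v)
      + chern n a (i q) * g, ?_⟩
    rw [Finset.prod_cons, hg]
    have e1 : ∑ p ∈ cons q t hq, i p = u + v + 2 := by rw [Finset.sum_cons]; omega
    have e3 : ∏ p ∈ cons q t hq, (n.choose (i p) : ℤ) = n.choose (i q) * B := by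
      rw [Finset.prod_cons]
    have e4 : ∑ p ∈ cons q t hq, dcoef n a (i p) * ∏ p' ∈ (cons q t hq).erase p,
        (n.choose (i p') : ℤ) = dcoef n a (i q) * B + (n.choose (i q) : ℤ) * D := by
      rw [Finset.sum_cons, Finset.erase_cons]
      congr 1
      rw [hD, Finset.mul_sum]
      refine Finset.sum_congr rfl fun p hp => ?_
      have hpq : p ≠ q := fun h => hq (h ▸ hp)
      rw [Finset.erase_cons_of_ne _ hpq.symm, Finset.prod_cons]
      ring
    rw [e1, show u + v + 2 - 1 = u + v + 1 from rfl, e3, e4, chern, hu, hv]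
    rw [show dcoef n a (u+1) = 2 * (n.choose (u + 1 - 1) : ℤ) - a * ((n - 1).choose (u+1-1) : ℤ) from rfl]
    simp only [Nat.add_sub_cancel, map_add, map_mul, map_sub, map_ofNat]
    ring

lemma mono_ne (n : ℕ) :
    (Finsupp.single (1 : Fin 2) n) ≠
      (Finsupp.single (0 : Fin 2) 1 + Finsupp.single (1 : Fin 2) (n - 1)) := by
  intro h
  have := DFunLike.congr_fun h (0 : Fin 2)
  simp [Finsupp.single_apply] at this

lemma coeff_gxx (g : MvPolynomial (Fin 2) ℤ) (m : Fin 2 →₀ ℕ) (hm : m 0 ≤ 1) :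
    MvPolynomial.coeff m (g * xv * xv) = 0 := by
  rw [xv, MvPolynomial.coeff_mul_X']
  split_ifs with h
  · rw [MvPolynomial.coeff_mul_X']
    rw [if_neg]
    simp [Finsupp.mem_support_iff, Finsupp.tsub_apply, Finsupp.single_apply]
    omega
  · rfl

lemma Cmono1 (A : ℤ) (n : ℕ) : MvPolynomial.C A * yv ^ n
    = MvPolynomial.monomial (Finsupp.single (1 : Fin 2) n) A := by
  rw [yv, MvPolynomial.C_mul_X_pow_eq_monomial]

lemma Cmono2 (B : ℤ) (k : ℕ) : MvPolynomial.C B * xv * yv ^ k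
    = MvPolynomial.monomial (Finsupp.single (0 : Fin 2) 1 + Finsupp.single (1 : Fin 2) k) B := by
  rw [xv, yv, show MvPolynomial.C B * X (0:Fin 2) = MvPolynomial.C B * X 0 ^ 1 by ring,
    MvPolynomial.C_mul_X_pow_eq_monomial, MvPolynomial.X_pow_eq_monomial,
    MvPolynomial.monomial_mul, mul_one]

lemma coeff_extractXY (n : ℕ) (A B : ℤ) (g : MvPolynomial (Fin 2) ℤ) :
    coeffXY n (MvPolynomial.C A * yv ^ n + MvPolynomial.C B * xv * yv ^ (n-1) + g * xv * xv)
      = B := by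
  rw [coeffXY, MvPolynomial.coeff_add, MvPolynomial.coeff_add, Cmono1, Cmono2,
    MvPolynomial.coeff_monomial, MvPolynomial.coeff_monomial,
    if_neg (mono_ne n), if_pos rfl, coeff_gxx]
  · ring
  · simp [Finsupp.single_apply]

lemma coeff_extractY (n : ℕ) (A B : ℤ) (g : MvPolynomial (Fin 2) ℤ) :
    coeffY n (MvPolynomial.C A * yv ^ n + MvPolynomial.C B * xv * yv ^ (n-1) + g * xv * xv)
      = A := by
  rw [coeffY, MvPolynomial.coeff_add, MvPolynomial.coeff_add, Cmono1, Cmono2,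
    MvPolynomial.coeff_monomial, MvPolynomial.coeff_monomial,
    if_pos rfl, if_neg (Ne.symm (mono_ne n)), coeff_gxx]
  · ring
  · simp [Finsupp.single_apply]

/-- As an identity in `ℚ`,
`A(a,I) = 2·(∏_s C(n, i_s))·∑_q i_q/(n + 1 − i_q)` (Proposition 2.7(i)). -/
theorem chernNum_formula_rat (n r : ℕ) (hn : 1 ≤ n) (hr : 1 ≤ r)
    (i : Fin r → ℕ) (hi : ∀ q, 1 ≤ i q) (hsum : ∑ q, i q = n) (a : ℤ) :
    (chernNum n a i : ℚ)
      = 2 * (∏ s, (n.choose (i s) : ℚ))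
          * ∑ q, (i q : ℚ) / ((n : ℚ) + 1 - (i q : ℚ)) := by
  have hne : (univ : Finset (Fin r)).Nonempty := by
    have : Nonempty (Fin r) := ⟨⟨0, hr⟩⟩
    exact Finset.univ_nonempty
  obtain ⟨g, hg⟩ := prod_chern_form n a i univ hne (fun q _ => hi q)
  rw [hsum] at hg
  have hval : chernNum n a i
      = (∑ q, dcoef n a (i q) * ∏ p ∈ (univ : Finset (Fin r)).erase q, (n.choose (i p) : ℤ))
        + a * ∏ q, (n.choose (i q) : ℤ) := by
    rw [chernNum, hg, coeff_extractXY, coeff_extractY]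
  -- bounds
  have hle : ∀ q : Fin r, i q ≤ n := fun q => by
    rw [← hsum]
    exact Finset.single_le_sum (f := fun p => i p) (fun p _ => Nat.zero_le _) (mem_univ q)
  have hden : ∀ q : Fin r, ((n : ℚ) + 1 - (i q : ℚ)) ≠ 0 := fun q => by
    have h1 : (i q : ℚ) ≤ n := by exact_mod_cast hle q
    linarith
  have hn0 : (n : ℚ) ≠ 0 := by positivity
  -- key per-index identities in ℚ
  have key1 : ∀ q : Fin r, (n.choose (i q - 1) : ℚ)
      = (n.choose (i q) : ℚ) * (i q : ℚ) / ((n : ℚ) + 1 - (i q : ℚ)) := by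
    intro q
    obtain ⟨k, hk⟩ : ∃ k, i q = k + 1 := ⟨i q - 1, by have := hi q; omega⟩
    have hnat : n.choose (k + 1) * (k + 1) = n.choose k * (n - k) :=
      Nat.choose_succ_right_eq n k
    have hkn : k ≤ n := by have := hle q; omega
    have hcast : ((n - k : ℕ) : ℚ) = (n : ℚ) - (k : ℚ) := Nat.cast_sub hkn
    have hq2 : (n.choose (k+1) : ℚ) * ((k : ℚ) + 1) = (n.choose k : ℚ) * ((n : ℚ) - (k : ℚ)) := by
      have := congrArg (Nat.cast : ℕ → ℚ) hnat
      push_cast at this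
      rw [this, hcast]
    rw [hk]
    simp only [Nat.add_sub_cancel]
    rw [eq_div_iff (by have hd := hden q; rw [hk] at hd; exact_mod_cast hd)]
    push_cast
    linarith [hq2]
  have key2 : ∀ q : Fin r, ((n-1).choose (i q - 1) : ℚ)
      = (n.choose (i q) : ℚ) * (i q : ℚ) / (n : ℚ) := by
    intro q
    obtain ⟨k, hk⟩ : ∃ k, i q = k + 1 := ⟨i q - 1, by have := hi q; omega⟩
    obtain ⟨m, hmn⟩ : ∃ m, n = m + 1 := ⟨n - 1, by omega⟩
    have hnat : (m+1) * m.choose k = (m+1).choose (k+1) * (k+1) :=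
      Nat.add_one_mul_choose_eq m k
    rw [hk, hmn]
    simp only [Nat.add_sub_cancel]
    rw [eq_div_iff (by push_cast; positivity)]
    have := congrArg (Nat.cast : ℕ → ℚ) hnat
    push_cast at this ⊢
    linarith
  -- now the ℚ computation
  rw [hval]
  simp only [dcoef]
  push_cast
  set P := ∏ s, (n.choose (i s) : ℚ) with hP
  have hPq : ∀ q : Fin r, (n.choose (i q) : ℚ) * ∏ p ∈ (univ : Finset (Fin r)).erase q,
      (n.choose (i p) : ℚ) = P :=
    fun q => Finset.mul_prod_erase univ (fun p => (n.choose (i p) : ℚ)) (mem_univ q)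
  have hsum' : (∑ q, (i q : ℚ)) = (n : ℚ) := by exact_mod_cast congrArg (Nat.cast : ℕ → ℚ) hsum
  have step : ∀ q : Fin r,
      (2 * (n.choose (i q - 1) : ℚ) - (a : ℚ) * ((n-1).choose (i q - 1) : ℚ))
        * ∏ p ∈ (univ : Finset (Fin r)).erase q, (n.choose (i p) : ℚ)
      = (2 * ((i q : ℚ) / ((n : ℚ) + 1 - (i q : ℚ))) - (a : ℚ) * ((i q : ℚ) / (n : ℚ))) * P := by
    intro q
    rw [key1 q, key2 q, ← hPq q]
    ring
  have hsumstep :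
      (∑ q, (2 * (n.choose (i q - 1) : ℚ) - (a : ℚ) * ((n-1).choose (i q - 1) : ℚ))
        * ∏ p ∈ (univ : Finset (Fin r)).erase q, (n.choose (i p) : ℚ))
      = (2 * (∑ q, (i q : ℚ) / ((n : ℚ) + 1 - (i q : ℚ))) - (a : ℚ)) * P := by
    rw [Finset.sum_congr rfl (fun q _ => step q), ← Finset.sum_mul]
    congr 1
    rw [Finset.sum_sub_distrib, ← Finset.mul_sum, ← Finset.mul_sum, ← Finset.sum_div, hsum',
      div_self hn0, mul_one]
  calc (∑ q, (2 * (n.choose (i q - 1) : ℚ) - (a : ℚ) * ((n-1).choose (i q - 1) : ℚ))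
        * ∏ p ∈ (univ : Finset (Fin r)).erase q, (n.choose (i p) : ℚ)) + (a : ℚ) * P
      = (2 * (∑ q, (i q : ℚ) / ((n : ℚ) + 1 - (i q : ℚ))) - (a : ℚ)) * P + (a : ℚ) * P := by
        rw [hsumstep]
    _ = 2 * P * ∑ q, (i q : ℚ) / ((n : ℚ) + 1 - (i q : ℚ)) := by ring
end

section
/- Let n ≥ 1, a ∈ ℤ, and let I = (i_1,…,i_r) be a partition of n into positive parts. Then A'(a,I) = 0; that is, coeff_{x·y^{n−1}}(∏_{q=1}^r c'_{i_q}(a)) + a·coeff_{y^n}(∏_{q=1}^r c'_{i_q}(a)) = 0. (This is Proposition 2.7(ii): every Chern number of the stably complex manifold (P^n(a), c_𝒯(a)) vanishes, hence by the Milnor–Novikov theorem this stably complex manifold bounds.) -/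
open MvPolynomial Finset

/-- The `i`-th Chern class `c'_i(a)` of the non-standard stably complex structure
`c_𝒯(a)` on `P^n(a)`: `C(n,i)·y^i − a·C(n−1,i−1)·x·y^{i−1}`. -/
noncomputable def chern' (n : ℕ) (a : ℤ) (i : ℕ) : MvPolynomial (Fin 2) ℤ :=
  MvPolynomial.C (n.choose i : ℤ) * yv ^ i
    - MvPolynomial.C (a * ((n - 1).choose (i - 1) : ℤ)) * xv * yv ^ (i - 1)

/-- The Chern number `A'(a,I)` of `(P^n(a), c_𝒯(a))`. -/
noncomputable def chernNum' (n : ℕ) (a : ℤ) {r : ℕ} (i : Fin r → ℕ) : ℤ :=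
  coeffXY n (∏ q, chern' n a (i q)) + a * coeffY n (∏ q, chern' n a (i q))

/-! Modulo `x²`, the identity `n·C(n-1,i-1) = i·C(n,i)` gives
`c'_i(a) ≡ C(n,i)·y^{i-1}·(y - (a·i/n)·x)`, so for a partition `I` of `n` the product of the
`c'_{i_q}(a)` is congruent to `(∏ C(n,i_q))·(y^n - a·x·y^{n-1})`: the `x`-linear terms add up
because `∑ i_q = n`. The functional `coeff_{x·y^{n-1}} + a·coeff_{y^n}` vanishes on this
polynomial and on every multiple of `x²`. -/

theorem MvPolynomial.coeff_eq_zero_of_X_pow_dvd {σ R : Type*} [CommSemiring R] {s : σ} {k : ℕ}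
    {p : MvPolynomial σ R} (h : X s ^ k ∣ p) {m : σ →₀ ℕ} (hm : m s < k) : p.coeff m = 0 := by
  classical
  obtain ⟨g, rfl⟩ := h
  rw [X_pow_eq_monomial, coeff_monomial_mul', if_neg]
  intro hle
  simpa using (hle s).trans_lt hm

theorem Finset.sq_dvd_prod_add_mul_sub {ι R : Type*} [DecidableEq ι] [CommRing R] (x : R)
    (s : Finset ι) (A h : ι → R) :
    x ^ 2 ∣ ∏ q ∈ s, (A q + x * h q)
      - (∏ q ∈ s, A q + x * ∑ q ∈ s, h q * ∏ p ∈ s.erase q, A p) := by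
  induction s using Finset.induction with
  | empty => simp
  | @insert j s hj ih =>
    obtain ⟨g, hg⟩ := ih
    have herase : ∑ q ∈ s, h q * ∏ p ∈ (insert j s).erase q, A p
        = A j * ∑ q ∈ s, h q * ∏ p ∈ s.erase q, A p := by
      rw [Finset.mul_sum]
      refine Finset.sum_congr rfl fun q hq => ?_
      rw [Finset.erase_insert_of_ne (ne_of_mem_of_not_mem hq hj).symm,
        Finset.prod_insert fun hj' => hj (Finset.mem_of_mem_erase hj')]
      ring
    refine ⟨(A j + x * h j) * g + h j * ∑ q ∈ s, h q * ∏ p ∈ s.erase q, A p, ?_⟩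
    rw [Finset.prod_insert hj, Finset.prod_insert hj, Finset.sum_insert hj,
      Finset.erase_insert hj, herase, eq_add_of_sub_eq hg]
    ring

theorem Nat.sum_choose_pred_mul_prod_erase {ι : Type*} [DecidableEq ι] {s : Finset ι} {n : ℕ}
    (hn : n ≠ 0) {i : ι → ℕ} (hi : ∀ q ∈ s, 1 ≤ i q) (hsum : ∑ q ∈ s, i q = n) :
    ∑ q ∈ s, (n - 1).choose (i q - 1) * ∏ p ∈ s.erase q, n.choose (i p)
      = ∏ q ∈ s, n.choose (i q) := by
  refine Nat.eq_of_mul_eq_mul_left (Nat.pos_of_ne_zero hn) ?_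
  calc n * ∑ q ∈ s, (n - 1).choose (i q - 1) * ∏ p ∈ s.erase q, n.choose (i p)
      = ∑ q ∈ s, i q * ∏ p ∈ s, n.choose (i p) := by
        rw [Finset.mul_sum]
        refine Finset.sum_congr rfl fun q hq => ?_
        have habsorb := Nat.add_one_mul_choose_eq (n - 1) (i q - 1)
        rw [Nat.sub_add_cancel (Nat.one_le_iff_ne_zero.mpr hn),
          Nat.sub_add_cancel (hi q hq)] at habsorb
        rw [← Finset.mul_prod_erase s _ hq, ← mul_assoc, habsorb]
        ring
    _ = n * ∏ q ∈ s, n.choose (i q) := by rw [← Finset.sum_mul, hsum]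

theorem chern'_eq (n : ℕ) (a : ℤ) (i : ℕ) :
    chern' n a i = C (n.choose i : ℤ) * yv ^ i
      + xv * (C (-(a * (n - 1).choose (i - 1))) * yv ^ (i - 1)) := by
  rw [chern', map_neg]
  ring

theorem sq_xv_dvd_prod_chern'_sub {ι : Type*} [Fintype ι] [DecidableEq ι] {n : ℕ} (hn : n ≠ 0)
    {i : ι → ℕ} (hi : ∀ q, 1 ≤ i q) (hsum : ∑ q, i q = n) (a : ℤ) :
    xv ^ 2 ∣ ∏ q, chern' n a (i q)
      - C (∏ q, (n.choose (i q) : ℤ)) * (yv ^ n - C a * xv * yv ^ (n - 1)) := by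
  have hlinear : ∀ q, C (-(a * (n - 1).choose (i q - 1))) * yv ^ (i q - 1)
        * ∏ p ∈ univ.erase q, C (n.choose (i p) : ℤ) * yv ^ (i p)
      = C (-a * ((n - 1).choose (i q - 1) * ∏ p ∈ univ.erase q, n.choose (i p) : ℕ))
        * yv ^ (n - 1) := by
    intro q
    have hexp : i q - 1 + ∑ p ∈ univ.erase q, i p = n - 1 := by
      have := Finset.add_sum_erase univ i (mem_univ q)
      have := hi q
      omega
    rw [prod_mul_distrib, prod_pow_eq_pow_sum, ← map_prod, ← hexp]
    push_cast
    simp only [map_neg, map_mul, pow_add]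
    ring
  convert sq_dvd_prod_add_mul_sub xv univ (fun q => C (n.choose (i q) : ℤ) * yv ^ i q)
    (fun q => C (-(a * (n - 1).choose (i q - 1))) * yv ^ (i q - 1)) using 2
  · simp only [chern'_eq]
  · rw [sum_congr rfl fun q _ => hlinear q, ← sum_mul, ← map_sum, ← Finset.mul_sum,
      ← Nat.cast_sum, Nat.sum_choose_pred_mul_prod_erase hn (fun q _ => hi q) hsum,
      prod_mul_distrib, prod_pow_eq_pow_sum, hsum, ← map_prod]
    push_cast
    simp only [map_neg, map_mul]
    ring

theorem coeffXY_add_mul_coeffY_eq_zero {n : ℕ} {a K : ℤ} {f : MvPolynomial (Fin 2) ℤ}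
    (hf : xv ^ 2 ∣ f - C K * (yv ^ n - C a * xv * yv ^ (n - 1))) :
    coeffXY n f + a * coeffY n f = 0 := by
  obtain ⟨g, hg⟩ := hf
  rw [sub_eq_iff_eq_add'] at hg
  have hx2 : ∀ m : Fin 2 →₀ ℕ, m 0 ≤ 1 → (xv ^ 2 * g).coeff m = 0 := fun m hm =>
    coeff_eq_zero_of_X_pow_dvd (dvd_mul_right _ _) (by omega)
  have hy : ∀ k m, C k * yv ^ m = monomial (Finsupp.single 1 m) k := fun k m =>
    C_mul_X_pow_eq_monomial
  have hxy : ∀ k m, C k * xv * yv ^ m = monomial (Finsupp.single 0 1 + Finsupp.single 1 m) k := by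
    intro k m
    rw [xv, yv, X_pow_eq_monomial, X, C_mul_monomial, monomial_mul]
    simp
  have hfirst : C K * (yv ^ n - C a * xv * yv ^ (n - 1))
      = C K * yv ^ n - C (K * a) * xv * yv ^ (n - 1) := by
    rw [map_mul]; ring
  rw [coeffXY, coeffY, hg, hfirst, hy, hxy, coeff_add, coeff_add, hx2 _ (by simp), hx2 _ (by simp)]
  have hne : Finsupp.single (1 : Fin 2) n ≠ Finsupp.single 0 1 + Finsupp.single 1 (n - 1) :=
    fun h => by simpa using DFunLike.congr_fun h 0
  simp only [coeff_sub, coeff_monomial, if_neg hne, if_neg hne.symm, if_true]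
  ring

theorem chernNum'_eq_zero_general (n r : ℕ) (hn : 1 ≤ n)
    (i : Fin r → ℕ) (hi : ∀ q, 1 ≤ i q) (hsum : ∑ q, i q = n) (a : ℤ) :
    chernNum' n a i = 0 :=
  coeffXY_add_mul_coeffY_eq_zero
    (sq_xv_dvd_prod_chern'_sub (Nat.one_le_iff_ne_zero.mp hn) hi hsum a)

/-- `A'(a,I) = 0`: every Chern number of the stably complex manifold
`(P^n(a), c_𝒯(a))` vanishes, hence this stably complex manifold bounds
(Proposition 2.7(ii)). -/
theorem chernNum'_eq_zero (n r : ℕ) (hn : 1 ≤ n) (hr : 1 ≤ r)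
    (i : Fin r → ℕ) (hi : ∀ q, 1 ≤ i q) (hsum : ∑ q, i q = n) (a : ℤ) :
    chernNum' n a i = 0 :=
  chernNum'_eq_zero_general n r hn i hi hsum a
end

section
/- Let n ≥ 2 and a, b ∈ ℤ. In ℤⁿ with standard basis e₁,…,eₙ, define the n + 3 column vectors: u₁ = e₁, u₂ = −e₁ − a·e₂, u₃ = −e₁ − b·e₂, w_j = e_{j+1} for j = 1,…,n−1, and w_n = −(e₂ + e₃ + ⋯ + eₙ). Then for every k ∈ {1,2,3} and every j ∈ {1,…,n}, the n×n integer matrix whose columns are u_k together with (w_l)_{l ≠ j} has determinant 1 or −1. (This verifies the paper's Proposition 4.6: the function λ on the facets of the polytope Q = H²×Δ^{n−1} with exceptional facets F₂, F₄, F₆, given by the displayed n×(n+3) matrix, is an isotropy function satisfying the smoothness condition of Sarkar's theorem — whenever facets F_{i₁},…,F_{i_r} of Q with assigned vectors have nonempty intersection, the vectors λ(F_{i₁}),…,λ(F_{i_r}) form part of a basis of ℤⁿ.) -/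
open Finset

/-- The columns `u₁ = e₁`, `u₂ = −e₁ − a·e₂`, `u₃ = −e₁ − b·e₂` assigned to the
facets `F₁, F₃, F₅` of `Q = H² × Δ^{n−1}` (0-indexed entries). -/
def uCol (n : ℕ) (a b : ℤ) : Fin 3 → Fin n → ℤ := fun k p =>
  if (p : ℕ) = 0 then (if (k : ℕ) = 0 then 1 else -1)
  else if (p : ℕ) = 1 then (if (k : ℕ) = 0 then 0 else if (k : ℕ) = 1 then -a else -b)
  else 0

/-- The columns `w_j = e_{j+1}` for `j = 1,…,n−1` and `w_n = −(e₂ + ⋯ + eₙ)`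
assigned to the facets `F₇,…,F_{n+6}` (0-indexed: for `j + 1 < n`, `w_j` is the
standard basis vector with `1` at position `j + 1`; the last column has `−1` at
all positions `≥ 1`). -/
def wCol (n : ℕ) : Fin n → Fin n → ℤ := fun j p =>
  if (j : ℕ) + 1 < n then (if (p : ℕ) = (j : ℕ) + 1 then 1 else 0)
  else if 1 ≤ (p : ℕ) then -1 else 0

/-!
Every `w_l` has first coordinate `0` and `u_k` has first coordinate `±1`, so Laplace expansion
along the first row reduces the determinant, up to sign, to a minor formed by `n - 1` of the `n`
vectors `e₂, …, eₙ, -(e₂ + ⋯ + eₙ)`. Omitting `-(e₂ + ⋯ + eₙ)` leaves the identity; omitting `e_i`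
leaves a matrix whose row `i` is `-1` in the last column and zero elsewhere, and expanding along
that row leaves the identity again.
-/

namespace Matrix

variable {R : Type*} [CommRing R] {m : ℕ}

theorem det_succ_row_of_eq_zero {A : Matrix (Fin (m + 1)) (Fin (m + 1)) R} {i j : Fin (m + 1)}
    (h : ∀ q, q ≠ j → A i q = 0) :
    A.det = (-1) ^ (i + j : ℕ) * A i j * (A.submatrix i.succAbove j.succAbove).det := by
  rw [det_succ_row A i, Finset.sum_eq_single j (fun q _ hq => by rw [h q hq, mul_zero, zero_mul])
    (by simp)]

theorem isUnit_det_succ_row_of_eq_zero {A : Matrix (Fin (m + 1)) (Fin (m + 1)) R}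
    {i j : Fin (m + 1)} (h : ∀ q, q ≠ j → A i q = 0) (hij : IsUnit (A i j))
    (hminor : IsUnit (A.submatrix i.succAbove j.succAbove).det) : IsUnit A.det := by
  rw [det_succ_row_of_eq_zero h]
  exact ((isUnit_neg_one.pow _).mul hij).mul hminor

end Matrix

/-- The ray generators `e₀, …, e_{m-1}, -(e₀ + ⋯ + e_{m-1})` of the normal fan of `Δ^m`, as
columns; the `w`-columns with their first row removed (`wCol_succ_row`). -/
def simplexFan (m : ℕ) : Matrix (Fin m) (Fin (m + 1)) ℤ :=
  Matrix.of fun r c => if c = Fin.last m then -1 else if c = r.castSucc then 1 else 0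

theorem simplexFan_submatrix_castSucc (m : ℕ) :
    (simplexFan m).submatrix id Fin.castSucc = 1 := by
  ext r q
  simp [simplexFan, Matrix.one_apply, eq_comm]

theorem isUnit_det_simplexFan_submatrix {m : ℕ} (j : Fin (m + 1)) :
    IsUnit ((simplexFan m).submatrix id j.succAbove).det := by
  induction j using Fin.lastCases with
  | last => simp [simplexFan_submatrix_castSucc]
  | cast i =>
    cases m with
    | zero => exact i.elim0
    | succ m =>
      refine Matrix.isUnit_det_succ_row_of_eq_zero (i := i) (j := Fin.last m) ?_ ?_ ?_
      · intro q hq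
        simp [simplexFan, Fin.succAbove_eq_last_iff (Fin.castSucc_ne_last i), hq]
      · simp [simplexFan]
      · rw [show ((simplexFan (m + 1)).submatrix id i.castSucc.succAbove).submatrix i.succAbove
            (Fin.last m).succAbove = 1 by
          ext r q
          simp [simplexFan, Matrix.one_apply, eq_comm]]
        simp

theorem wCol_succ_row (m : ℕ) (c : Fin (m + 1)) (r : Fin m) :
    wCol (m + 1) c r.succ = simplexFan m r c := by
  simp only [wCol, simplexFan, Matrix.of_apply, Fin.ext_iff, Fin.val_succ, Fin.val_last,
    Fin.val_castSucc]
  have := c.isLt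
  split_ifs <;> omega

theorem isotropy_function_det_general (n : ℕ) (a b : ℤ)
    (k : Fin 3) (j : Fin n) :
    (Matrix.of fun p q : Fin n =>
        if q = j then uCol n a b k p else wCol n q p).det = 1 ∨
    (Matrix.of fun p q : Fin n =>
        if q = j then uCol n a b k p else wCol n q p).det = -1 := by
  obtain ⟨m, rfl⟩ : ∃ m, n = m + 1 := Nat.exists_eq_succ_of_ne_zero j.pos.ne'
  rw [← Int.isUnit_iff]
  refine Matrix.isUnit_det_succ_row_of_eq_zero (i := 0) (j := j) ?_ ?_ ?_
  · intro q hq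
    simp [hq, wCol]
  · simp only [Matrix.of_apply, uCol, Fin.val_zero, if_true]
    split_ifs <;> simp
  · refine (congrArg (fun A : Matrix (Fin m) (Fin m) ℤ => IsUnit A.det) ?_).mpr
      (isUnit_det_simplexFan_submatrix j)
    ext r q
    simp [Fin.succAbove_ne, wCol_succ_row]

/-- for `n ≥ 2`, `a, b ∈ ℤ`, every `k ∈ {1,2,3}` and `j ∈ {1,…,n}`,
the `n×n` integer matrix whose columns are `u_k` together with `(w_l)_{l ≠ j}` has
determinant `1` or `−1`; this verifies Proposition 4.6: `λ` is an isotropy function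
on `⟨Q ∖ F₂, F₄, F₆⟩` satisfying the smoothness condition of Sarkar's theorem. -/
theorem isotropy_function_det (n : ℕ) (hn : 2 ≤ n) (a b : ℤ)
    (k : Fin 3) (j : Fin n) :
    (Matrix.of fun p q : Fin n =>
        if q = j then uCol n a b k p else wCol n q p).det = 1 ∨
    (Matrix.of fun p q : Fin n =>
        if q = j then uCol n a b k p else wCol n q p).det = -1 :=
  isotropy_function_det_general n a b k j
end
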